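/- arXiv:0901.2147 — 3 statements merged into one kernel-verified Lean document; each statement's English description precedes it below -/
import Mathlib

section
/- Let A be an m × n binary matrix such that the map x ↦ Ax (over 𝔽₂) is injective on k-sparse vectors in 𝔽₂^n. Define a ∈ ℝ^n by a_i = Σ_{j=1}^m A(j,i) · 2^(j·⌈log₂(k+1)⌉). Then the map x ↦ a·x (real inner product) is injective on k-sparse vectors in {0,1}^n ⊆ ℝ^n. -/
/-!
With `c = ⌈log₂ (k + 1)⌉`, the entries of `A x` for a `k`-sparse `0/1` vector `x` are integers
at most `k < 2 ^ c`, so `a ⬝ x = ∑ⱼ (A x)ⱼ 2 ^ ((j + 1) c)` is a base-`2 ^ c` expansion whose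
digits are the entries of `A x`. Hence `a ⬝ x` determines `A x` over `ℕ`, so also over `𝔽₂`, and
injectivity of `A` over `𝔽₂` on `k`-sparse vectors determines `x`.
-/

open Finset Matrix

theorem Nat.sum_mul_pow_injOn (m B : ℕ) :
    Set.InjOn (fun f : Fin m → ℕ => ∑ j, f j * B ^ (j : ℕ)) {f | ∀ j, f j < B} := by
  intro f hf g hg h
  rcases le_or_gt B 1 with hB | hB
  · funext j
    have := hf j
    have := hg j
    omega
  refine List.ofFn_inj.mp (Nat.ofDigits_inj_of_len_eq hB (by simp) ?_ ?_ ?_)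
  · simpa [List.mem_ofFn] using hf
  · simpa [List.mem_ofFn] using hg
  · simpa [Nat.ofDigits_eq_sum_mapIdx, List.mapIdx_eq_ofFn, List.sum_ofFn] using h

theorem exists_natCast_eq_of_forall_eq_zero_or_eq_one {ι R : Type*} [AddMonoidWithOne R]
    {x : ι → R} (hx : ∀ i, x i = 0 ∨ x i = 1) :
    ∃ X : ι → ℕ, (∀ i, X i ≤ 1) ∧ x = fun i => (X i : R) := by
  classical
  refine ⟨fun i => if x i = 0 then 0 else 1, fun i => ?_, funext fun i => ?_⟩
  · dsimp only; split_ifs <;> simp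
  · rcases hx i with h | h <;> simp [h]

theorem Matrix.mulVec_apply_le_card_support {m ι : Type*} [Fintype ι] {A : Matrix m ι ℕ}
    (hA : ∀ j i, A j i ≤ 1) {X : ι → ℕ} (hX : ∀ i, X i ≤ 1) (j : m) :
    (A *ᵥ X) j ≤ #{i | X i ≠ 0} := by
  rw [card_filter]
  refine sum_le_sum fun i _ => ?_
  split_ifs with h
  · simpa using Nat.mul_le_mul (hA j i) (hX i)
  · simp_all

theorem sum_mul_natCast_eq_sum_mulVec {m ι R : Type*} [Fintype m] [Fintype ι] [CommSemiring R]
    (A : Matrix m ι ℕ) (w : m → R) {a : ι → R} (ha : ∀ i, a i = ∑ j, (A j i : R) * w j)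
    (X : ι → ℕ) : ∑ i, a i * (X i : R) = ∑ j, ((A *ᵥ X) j : R) * w j := by
  simp only [ha, mulVec, dotProduct, Nat.cast_sum, Nat.cast_mul, sum_mul]
  rw [sum_comm]
  refine sum_congr rfl fun j _ => sum_congr rfl fun i _ => by ring

theorem natCast_zmod_two_injOn {ι : Type*} :
    Set.InjOn (fun X : ι → ℕ => fun i => (X i : ZMod 2)) {X | ∀ i, X i ≤ 1} := by
  intro X hX Y hY h
  funext i
  have := congrArg ZMod.val (congrFun h i)
  simp only [ZMod.val_natCast] at this
  have := hX i; have := hY i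
  omega

theorem eq_of_sum_mul_two_pow_succ_mul_eq {m c : ℕ} {f g : Fin m → ℕ} (hf : ∀ j, f j < 2 ^ c)
    (hg : ∀ j, g j < 2 ^ c)
    (h : ∑ j, f j * 2 ^ ((j + 1) * c) = ∑ j, g j * 2 ^ ((j + 1) * c)) : f = g := by
  have shift (f : Fin m → ℕ) :
      ∑ j, f j * 2 ^ ((j + 1) * c) = 2 ^ c * ∑ j, f j * (2 ^ c) ^ (j : ℕ) := by
    rw [mul_sum]
    refine sum_congr rfl fun j _ => ?_
    ring
  rw [shift, shift] at h
  exact Nat.sum_mul_pow_injOn m (2 ^ c) hf hg (Nat.eq_of_mul_eq_mul_left (by positivity) h)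

theorem card_natCast_support_le {ι R : Type*} [Fintype ι] [AddMonoidWithOne R] [DecidableEq R]
    (X : ι → ℕ) : #{i | (X i : R) ≠ 0} ≤ #{i | X i ≠ 0} :=
  card_le_card (monotone_filter_right _ fun i _ hi hX => hi (by simp [hX]))

theorem stmt_1 (m n k : ℕ) (A : Matrix (Fin m) (Fin n) ℕ)
    (hbin : ∀ j i, A j i ≤ 1)
    (hinj : Set.InjOn (fun x : Fin n → ZMod 2 => (A.map (Nat.cast : ℕ → ZMod 2)).mulVec x)
      {x : Fin n → ZMod 2 | (Finset.univ.filter (fun i => x i ≠ 0)).card ≤ k})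
    (a : Fin n → ℝ)
    (ha : ∀ i, a i = ∑ j : Fin m, (A j i : ℝ) * 2 ^ ((j.val + 1) * Nat.clog 2 (k + 1))) :
    Set.InjOn (fun x : Fin n → ℝ => ∑ i : Fin n, a i * x i)
      {x : Fin n → ℝ | (∀ i, x i = 0 ∨ x i = 1) ∧
        (Finset.univ.filter (fun i => x i ≠ 0)).card ≤ k} := by
  have hk : k < 2 ^ Nat.clog 2 (k + 1) := Nat.le_pow_clog one_lt_two _
  rintro x ⟨hx01, hxk⟩ y ⟨hy01, hyk⟩ hxy
  obtain ⟨X, hX, rfl⟩ := exists_natCast_eq_of_forall_eq_zero_or_eq_one hx01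
  obtain ⟨Y, hY, rfl⟩ := exists_natCast_eq_of_forall_eq_zero_or_eq_one hy01
  simp only [Nat.cast_ne_zero] at hxk hyk
  have hAXY : A *ᵥ X = A *ᵥ Y := by
    refine eq_of_sum_mul_two_pow_succ_mul_eq
      (fun j => (mulVec_apply_le_card_support hbin hX j).trans hxk |>.trans_lt hk)
      (fun j => (mulVec_apply_le_card_support hbin hY j).trans hyk |>.trans_lt hk) ?_
    simp only [sum_mul_natCast_eq_sum_mulVec A _ ha] at hxy
    exact_mod_cast hxy
  have hXY : X = Y := by
    refine natCast_zmod_two_injOn hX hY (hinj ((card_natCast_support_le X).trans hxk)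
      ((card_natCast_support_le Y).trans hyk) ?_)
    have hcast (Z : Fin n → ℕ) : A.map (Nat.cast : ℕ → ZMod 2) *ᵥ (fun i => (Z i : ZMod 2)) =
        fun j => ((A *ᵥ Z) j : ZMod 2) :=
      funext fun j => ((Nat.castRingHom _).map_mulVec A Z j).symm
    simp only [hcast, hAXY]
  rw [hXY]
end

section
/- Let A be invertible with Ax = b, b ≠ 0, and (A + ΔA)y = b + Δb with ‖ΔA‖_∞ ≤ ε‖A‖_∞, ‖Δb‖_∞ ≤ ε‖b‖_∞, and ε·κ_∞(A) ≤ 1/2, where κ_∞(A) = ‖A‖_∞‖A⁻¹‖_∞. Then ‖x − y‖_∞ / ‖x‖_∞ ≤ 4·ε·κ_∞(A). -/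
/-!
Since `A (x - y) = ΔA y - Δb`, we get `‖x - y‖ ≤ ‖A⁻¹‖ (ε ‖A‖ ‖y‖ + ε ‖b‖) ≤ εκ (‖y‖ + ‖x‖)`
using `‖b‖ ≤ ‖A‖ ‖x‖`. Bounding `‖y‖ ≤ ‖x‖ + ‖x - y‖` and absorbing the `εκ ‖x - y‖` term,
which is possible because `εκ ≤ 1/2`, leaves `‖x - y‖ ≤ 4 εκ ‖x‖`.
-/

open Matrix

/-- Operator ∞-norm of a square complex matrix: maximum absolute row sum. -/
noncomputable def normInf {n : ℕ} (M : Matrix (Fin n) (Fin n) ℂ) : ℝ :=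
  ⨆ i : Fin n, ∑ j : Fin n, ‖M i j‖

/-- Condition number w.r.t. the operator ∞-norm. -/
noncomputable def condInf {n : ℕ} (M : Matrix (Fin n) (Fin n) ℂ) : ℝ :=
  normInf M * normInf M⁻¹

open scoped Matrix.Norms.Operator

lemma normInf_eq_linfty_opNorm {n : ℕ} (M : Matrix (Fin n) (Fin n) ℂ) : normInf M = ‖M‖ := by
  rw [linfty_opNorm_def, Finset.sup_univ_eq_ciSup, NNReal.coe_iSup]
  simp [normInf]

lemma norm_sub_le_four_mul_of_norm_sub_le {E : Type*} [SeminormedAddCommGroup E] {x y : E}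
    {t : ℝ} (ht : 0 ≤ t) (ht_half : t ≤ 1 / 2) (h : ‖x - y‖ ≤ t * (‖x‖ + ‖y‖)) :
    ‖x - y‖ ≤ 4 * t * ‖x‖ := by
  have hy : ‖y‖ ≤ ‖x‖ + ‖x - y‖ := by
    simpa using norm_sub_le x (x - y)
  have hd : ‖x - y‖ ≤ t * (2 * ‖x‖ + ‖x - y‖) := 
    h.trans (mul_le_mul_of_nonneg_left (by linarith) ht)
  nlinarith [norm_nonneg x, norm_nonneg (x - y)]

namespace Matrix

variable {m 𝕜 : Type*} [Fintype m] [DecidableEq m] [NormedField 𝕜]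

lemma sub_eq_inv_mulVec_of_perturbation {A ΔA : Matrix m m 𝕜} {x y b Δb : m → 𝕜}
    (hA : IsUnit A) (hAx : A *ᵥ x = b) (hpert : (A + ΔA) *ᵥ y = b + Δb) :
    x - y = A⁻¹ *ᵥ (ΔA *ᵥ y - Δb) := by
  have hres : A *ᵥ (x - y) = ΔA *ᵥ y - Δb := by
    rw [add_mulVec] at hpert
    rw [mulVec_sub, hAx, eq_sub_of_add_eq hpert]
    abel
  rw [← hres, mulVec_mulVec, nonsing_inv_mul A ((isUnit_iff_isUnit_det A).mp hA), one_mulVec]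

lemma norm_sub_le_of_perturbation {A ΔA : Matrix m m 𝕜} {x y b Δb : m → 𝕜} {ε : ℝ}
    (hε : 0 ≤ ε) (hA : IsUnit A) (hAx : A *ᵥ x = b) (hpert : (A + ΔA) *ᵥ y = b + Δb)
    (hΔA : ‖ΔA‖ ≤ ε * ‖A‖) (hΔb : ‖Δb‖ ≤ ε * ‖b‖) :
    ‖x - y‖ ≤ ε * (‖A‖ * ‖A⁻¹‖) * (‖x‖ + ‖y‖) := by
  have hb : ‖b‖ ≤ ‖A‖ * ‖x‖ := hAx ▸ linfty_opNorm_mulVec A x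
  calc ‖x - y‖ = ‖A⁻¹ *ᵥ (ΔA *ᵥ y - Δb)‖ := by
        rw [sub_eq_inv_mulVec_of_perturbation hA hAx hpert]
    _ ≤ ‖A⁻¹‖ * (‖ΔA‖ * ‖y‖ + ‖Δb‖) := by
        refine (linfty_opNorm_mulVec _ _).trans (mul_le_mul_of_nonneg_left ?_ (norm_nonneg _))
        exact (norm_sub_le _ _).trans (add_le_add_left (linfty_opNorm_mulVec _ _) _)
    _ ≤ ‖A⁻¹‖ * (ε * ‖A‖ * ‖y‖ + ε * (‖A‖ * ‖x‖)) := by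
        gcongr
        exact hΔb.trans (mul_le_mul_of_nonneg_left hb hε)
    _ = ε * (‖A‖ * ‖A⁻¹‖) * (‖x‖ + ‖y‖) := by ring

end Matrix

theorem stmt_12_general {n : ℕ} (A ΔA : Matrix (Fin n) (Fin n) ℂ)
    (x y b Δb : Fin n → ℂ) (ε : ℝ) (hε : 0 ≤ ε)
    (hA : IsUnit A)
    (hAx : A.mulVec x = b)
    (hpert : (A + ΔA).mulVec y = b + Δb)
    (hΔA : normInf ΔA ≤ ε * normInf A)
    (hΔb : ‖Δb‖ ≤ ε * ‖b‖)
    (hsmall : ε * condInf A ≤ 1 / 2) :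
    ‖x - y‖ / ‖x‖ ≤ 4 * ε * condInf A := by
  simp only [condInf, normInf_eq_linfty_opNorm] at hΔA hsmall ⊢
  have hκ : 0 ≤ ε * (‖A‖ * ‖A⁻¹‖) := by positivity
  have hclose := norm_sub_le_four_mul_of_norm_sub_le hκ hsmall
    (norm_sub_le_of_perturbation hε hA hAx hpert hΔA hΔb)
  rw [← mul_assoc] at hclose
  exact div_le_of_le_mul₀ (norm_nonneg x) (by positivity) hclose

theorem stmt_12 {n : ℕ} (A ΔA : Matrix (Fin n) (Fin n) ℂ)
    (x y b Δb : Fin n → ℂ) (ε : ℝ) (hε : 0 ≤ ε)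
    (hA : IsUnit A) (hb : b ≠ 0)
    (hAx : A.mulVec x = b)
    (hpert : (A + ΔA).mulVec y = b + Δb)
    (hΔA : normInf ΔA ≤ ε * normInf A)
    (hΔb : ‖Δb‖ ≤ ε * ‖b‖)
    (hsmall : ε * condInf A ≤ 1 / 2) :
    ‖x - y‖ / ‖x‖ ≤ 4 * ε * condInf A :=
  stmt_12_general A ΔA x y b Δb ε hε hA hAx hpert hΔA hΔb hsmall
end

section
/- Let a_1,…,a_n be distinct nonzero complex numbers, x ∈ ℂ^n a vector supported on E ⊆ {1,…,n} with |E| = k, and define syndromes y_i = Σ_j x_j a_j^i for i = 0,…,2k−1. Then h = (h_k, h_{k-1}, …, h_0) given by the coefficients of L(z) = ∏_{e∈E}(1 − z a_e) = Σ_{i=0}^k h_{k-i} z^i (suitably ordered) satisfies the k × (k+1) Toeplitz system: Σ_{j=0}^{k} y_{i+j} · c_j = 0 for i = 0,…,k−1, where c_j are the coefficients of L arranged so that the error locator polynomial annihilates the syndrome recurrence. -/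
/-!
The reflection of the error locator `L = ∏ e ∈ E, (1 - a e X)` in degree `k = #E` is
`∏ e ∈ E, (X - a e)`, which vanishes at every `a e`. Pairing the coefficients of `L` with a
geometric sequence `a ^ (i + k - j)` evaluates this reflection at `a`, so each term
`x e * a e ^ i` of the syndrome sequence satisfies the recurrence, and hence so does their sum.
-/

open Polynomial Finset

namespace Polynomial

variable {R : Type*} [CommRing R]

theorem reflect_one_sub_C_mul_X (a : R) : reflect 1 (1 - C a * X) = X - C a := by
  rw [reflect_sub, reflect_one, reflect_C_mul, reflect_one_X, pow_one, mul_one]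

theorem natDegree_one_sub_C_mul_X_le (a : R) : (1 - C a * X).natDegree ≤ 1 := by
  compute_degree!

theorem natDegree_prod_one_sub_C_mul_X_le {ι : Type*} (s : Finset ι) (a : ι → R) :
    (∏ e ∈ s, (1 - C (a e) * X)).natDegree ≤ #s := by
  refine (natDegree_prod_le _ _).trans ?_
  simpa using sum_le_card_nsmul s _ 1 fun e _ => natDegree_one_sub_C_mul_X_le (a e)

theorem reflect_prod_one_sub_C_mul_X {ι : Type*} (s : Finset ι) (a : ι → R) :
    reflect #s (∏ e ∈ s, (1 - C (a e) * X)) = ∏ e ∈ s, (X - C (a e)) := by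
  classical
  induction s using Finset.induction_on with
  | empty => simp
  | insert e s he ih =>
    rw [prod_insert he, prod_insert he, card_insert_of_notMem he, add_comm,
      reflect_mul _ _ (natDegree_one_sub_C_mul_X_le _) (natDegree_prod_one_sub_C_mul_X_le _ _),
      reflect_one_sub_C_mul_X, ih]

theorem sum_coeff_mul_pow_eq_eval_reflect (p : R[X]) {N : ℕ} (hp : p.natDegree ≤ N) (z : R) :
    ∑ j ∈ range (N + 1), p.coeff j * z ^ (N - j) = (reflect N p).eval z := by
  rw [eval_eq_sum_range' (n := N + 1), ← sum_range_reflect]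
  · refine sum_congr rfl fun j hj => ?_
    have : j ≤ N := by simp at hj; omega
    rw [coeff_reflect, revAt_le (by omega)]
    congr 2
    omega
  · exact Nat.lt_succ_of_le (natDegree_reflect_le.trans (max_le le_rfl hp))

theorem sum_coeff_mul_pow_add_sub_eq (p : R[X]) {N : ℕ} (hp : p.natDegree ≤ N) (z : R) (i : ℕ) :
    ∑ j ∈ range (N + 1), p.coeff j * z ^ (i + N - j) = z ^ i * (reflect N p).eval z := by
  rw [← sum_coeff_mul_pow_eq_eval_reflect p hp, mul_sum]
  refine sum_congr rfl fun j hj => ?_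
  rw [Nat.add_sub_assoc (by simp at hj; omega), pow_add]
  ring

theorem sum_coeff_mul_powerSum_eq_zero {ι : Type*} [Fintype ι] (p : R[X]) {N : ℕ}
    (hp : p.natDegree ≤ N) (x a : ι → R) (hroot : ∀ e, x e = 0 ∨ (reflect N p).IsRoot (a e))
    (i : ℕ) : ∑ j ∈ range (N + 1), p.coeff j * ∑ e, x e * a e ^ (i + N - j) = 0 := by
  simp_rw [mul_sum]
  rw [sum_comm]
  refine sum_eq_zero fun e _ => ?_
  rcases hroot e with hx | hroot
  · simp [hx]
  · simp_rw [mul_left_comm _ (x e), ← mul_sum, sum_coeff_mul_pow_add_sub_eq p hp,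
      hroot.eq_zero, mul_zero]

end Polynomial

theorem stmt_16_general {n k : ℕ} (a : Fin n → ℂ)
    (x : Fin n → ℂ) (E : Finset (Fin n)) (hE : E.card = k)
    (hsupp : ∀ j, j ∉ E → x j = 0)
    (y : ℕ → ℂ) (hy : ∀ i, y i = ∑ j : Fin n, x j * a j ^ i)
    (L : Polynomial ℂ) (hL : L = ∏ e ∈ E, (1 - Polynomial.C (a e) * Polynomial.X)) :
    ∀ i : ℕ, ∑ j ∈ Finset.range (k + 1), L.coeff j * y (i + k - j) = 0 := by
  subst hL hE
  have hroot : ∀ e, x e = 0 ∨ (reflect #E (∏ e ∈ E, (1 - C (a e) * X))).IsRoot (a e) := by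
    intro e
    by_cases he : e ∈ E
    · right
      rw [reflect_prod_one_sub_C_mul_X, IsRoot, eval_prod]
      exact prod_eq_zero he (by simp)
    · exact .inl (hsupp e he)
  intro i
  simp only [hy]
  exact sum_coeff_mul_powerSum_eq_zero _ (natDegree_prod_one_sub_C_mul_X_le E a) x a hroot i

theorem stmt_16 {n k : ℕ} (a : Fin n → ℂ) (hdist : Function.Injective a)
    (ha : ∀ j, a j ≠ 0)
    (x : Fin n → ℂ) (E : Finset (Fin n)) (hE : E.card = k)
    (hsupp : ∀ j, j ∉ E → x j = 0)
    (y : ℕ → ℂ) (hy : ∀ i, y i = ∑ j : Fin n, x j * a j ^ i)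
    (L : Polynomial ℂ) (hL : L = ∏ e ∈ E, (1 - Polynomial.C (a e) * Polynomial.X)) :
    ∀ i : ℕ, ∑ j ∈ Finset.range (k + 1), L.coeff j * y (i + k - j) = 0 :=
  stmt_16_general a x E hE hsupp y hy L hL
end
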